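/- Let M be a semigroup in the category Cu with the following property: whenever a₁, a₂, b₁, b₂ ∈ M satisfy aᵢ ≪ bⱼ for all i, j ∈ {1,2}, then for all a₁′ ≪ a₁ and a₂′ ≪ a₂ there exists c ∈ M with aᵢ′ ≪ c ≪ bⱼ for all i, j ∈ {1,2}. Then M has the Riesz interpolation property. -/

import Mathlib

noncomputable section

set_option maxHeartbeats 1000000

/-- `a` is compactly contained in `b`: for every increasing sequence having a supremum
which dominates `b`, some term already dominates `a`. -/
def CompactlyContained {M : Type*} [Preorder M] (a b : M) : Prop :=
  ∀ c : ℕ → M, Monotone c → ∀ s : M, IsLUB (Set.range c) s → b ≤ s → ∃ n, a ≤ c n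

/-- The Riesz interpolation property. -/
def RieszInterpolation (M : Type*) [Preorder M] : Prop :=
  ∀ a₁ a₂ b₁ b₂ : M, a₁ ≤ b₁ → a₁ ≤ b₂ → a₂ ≤ b₁ → a₂ ≤ b₂ →
    ∃ c : M, a₁ ≤ c ∧ a₂ ≤ c ∧ c ≤ b₁ ∧ c ≤ b₂

/-- A partially ordered abelian semigroup is in the category `Cu` if increasing sequences
have suprema, every element is the supremum of a rapidly increasing sequence, suprema of
increasing sequences are additive, and `≪` is additive. -/
def IsCuSemigroup (M : Type*) [AddCommSemigroup M] [PartialOrder M]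
    [CovariantClass M M (· + ·) (· ≤ ·)] : Prop :=
  (∀ c : ℕ → M, Monotone c → ∃ s : M, IsLUB (Set.range c) s) ∧
  (∀ a : M, ∃ x : ℕ → M, (∀ n, CompactlyContained (x n) (x (n + 1))) ∧
    IsLUB (Set.range x) a) ∧
  (∀ (c d : ℕ → M) (s t : M), Monotone c → Monotone d →
    IsLUB (Set.range c) s → IsLUB (Set.range d) t →
    IsLUB (Set.range fun n => c n + d n) (s + t)) ∧
  (∀ a b a' b' : M, CompactlyContained a b → CompactlyContained a' b' →
    CompactlyContained (a + a') (b + b'))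

/-!
Approximate `a₁` and `a₂` by rapidly increasing sequences `xₙ` and `yₙ`. The elements lying
compactly below some common compact lower bound of `b₁` and `b₂` form an upward directed set:
the hypothesis interpolates two such elements compactly below a new common lower bound `d`, and
a rapidly increasing approximation of `d` then pushes the interpolant compactly below `d`. This
set contains every `xₙ` and `yₙ`, so it contains an increasing sequence dominating them all,
and the supremum of that sequence lies between `a₁, a₂` and `b₁, b₂`.
-/

local infix:50 " ≪ " => CompactlyContained

section Preorder

variable {M : Type*} [Preorder M]

theorem CompactlyContained.le {a b : M} (h : a ≪ b) : a ≤ b :=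
  let ⟨_, hn⟩ := h (fun _ => b) monotone_const b (by simp [isLUB_singleton]) le_rfl
  hn

theorem CompactlyContained.trans_le {a b c : M} (h : a ≪ b) (h' : b ≤ c) : a ≪ c :=
  fun s hs t ht hct => h s hs t ht (h'.trans hct)

theorem monotone_of_compactlyContained_succ {x : ℕ → M} (hx : ∀ n, x n ≪ x (n + 1)) :
    Monotone x :=
  monotone_nat_of_le_succ fun n => (hx n).le

theorem compactlyContained_of_isLUB {x : ℕ → M} {a : M} (hx : ∀ n, x n ≪ x (n + 1))
    (ha : IsLUB (Set.range x) a) (n : ℕ) : x n ≪ a :=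
  (hx n).trans_le (ha.1 ⟨n + 1, rfl⟩)

theorem exists_le_le_compactlyContained
    (happrox : ∀ a : M, ∃ x : ℕ → M, (∀ n, x n ≪ x (n + 1)) ∧ IsLUB (Set.range x) a)
    {a a' d : M} (ha : a ≪ d) (ha' : a' ≪ d) : ∃ e, a ≤ e ∧ a' ≤ e ∧ e ≪ d := by
  obtain ⟨t, ht, htd⟩ := happrox d
  have t_mono := monotone_of_compactlyContained_succ ht
  obtain ⟨k, hk⟩ := ha t t_mono d htd le_rfl
  obtain ⟨k', hk'⟩ := ha' t t_mono d htd le_rfl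
  exact ⟨t (max k k'), hk.trans (t_mono (le_max_left k k')),
    hk'.trans (t_mono (le_max_right k k')), compactlyContained_of_isLUB ht htd _⟩

theorem DirectedOn.exists_monotone_ge {S : Set M} (hS : DirectedOn (· ≤ ·) S) (u : ℕ → M)
    (hu : ∀ n, u n ∈ S) : ∃ e : ℕ → M, Monotone e ∧ (∀ n, e n ∈ S) ∧ ∀ n, u n ≤ e n := by
  have hstep : ∀ (n : ℕ) (s : S), ∃ t : S, (s : M) ≤ t ∧ u (n + 1) ≤ t := fun n s =>
    let ⟨t, htS, hst, hut⟩ := hS s s.2 (u (n + 1)) (hu (n + 1))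
    ⟨⟨t, htS⟩, hst, hut⟩
  choose next hle_next hu_next using hstep
  let e : ℕ → S := fun n => Nat.rec (motive := fun _ => S) ⟨u 0, hu 0⟩ next n
  refine ⟨fun n => e n, monotone_nat_of_le_succ fun n => hle_next n (e n),
    fun n => (e n).2, ?_⟩
  rintro (_ | n)
  · exact le_rfl
  · exact hu_next n (e n)

def commonCompactBelow (b₁ b₂ : M) : Set M :=
  {e | ∃ E, e ≪ E ∧ E ≪ b₁ ∧ E ≪ b₂}

variable {b₁ b₂ : M}

theorem le_of_mem_commonCompactBelow {e : M} (he : e ∈ commonCompactBelow b₁ b₂) :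
    e ≤ b₁ ∧ e ≤ b₂ :=
  let ⟨_, heE, hE₁, hE₂⟩ := he
  ⟨heE.le.trans hE₁.le, heE.le.trans hE₂.le⟩

theorem mem_commonCompactBelow_of_isLUB {x : ℕ → M} {a : M} (hx : ∀ n, x n ≪ x (n + 1))
    (ha : IsLUB (Set.range x) a) (h₁ : a ≤ b₁) (h₂ : a ≤ b₂) (n : ℕ) :
    x n ∈ commonCompactBelow b₁ b₂ :=
  ⟨x (n + 1), hx n, (compactlyContained_of_isLUB hx ha _).trans_le h₁,
    (compactlyContained_of_isLUB hx ha _).trans_le h₂⟩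

theorem directedOn_commonCompactBelow
    (happrox : ∀ a : M, ∃ x : ℕ → M, (∀ n, x n ≪ x (n + 1)) ∧ IsLUB (Set.range x) a)
    (H : ∀ a₁ a₂ : M, a₁ ≪ b₁ → a₁ ≪ b₂ → a₂ ≪ b₁ → a₂ ≪ b₂ →
      ∀ a₁' a₂' : M, a₁' ≪ a₁ → a₂' ≪ a₂ → ∃ c : M, a₁' ≪ c ∧ a₂' ≪ c ∧ c ≪ b₁ ∧ c ≪ b₂) :
    DirectedOn (· ≤ ·) (commonCompactBelow b₁ b₂) := by
  rintro e ⟨E, heE, hE₁, hE₂⟩ e' ⟨E', heE', hE'₁, hE'₂⟩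
  obtain ⟨d, hed, he'd, hd₁, hd₂⟩ := H E E' hE₁ hE₂ hE'₁ hE'₂ e e' heE heE'
  obtain ⟨f, hef, he'f, hfd⟩ := exists_le_le_compactlyContained happrox hed he'd
  exact ⟨f, ⟨d, hfd, hd₁, hd₂⟩, hef, he'f⟩

end Preorder

theorem stmt12 {M : Type*} [AddCommSemigroup M] [PartialOrder M]
    [CovariantClass M M (· + ·) (· ≤ ·)] (hM : IsCuSemigroup M)
    (H : ∀ a₁ a₂ b₁ b₂ : M,
      CompactlyContained a₁ b₁ → CompactlyContained a₁ b₂ →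
      CompactlyContained a₂ b₁ → CompactlyContained a₂ b₂ →
      ∀ a₁' a₂' : M, CompactlyContained a₁' a₁ → CompactlyContained a₂' a₂ →
        ∃ c : M, CompactlyContained a₁' c ∧ CompactlyContained a₂' c ∧
          CompactlyContained c b₁ ∧ CompactlyContained c b₂) :
    RieszInterpolation M := by
  intro a₁ a₂ b₁ b₂ h₁₁ h₁₂ h₂₁ h₂₂
  obtain ⟨hsup, happrox, -, -⟩ := hM
  have hS := directedOn_commonCompactBelow happrox (H · · b₁ b₂)
  obtain ⟨x, hx, hxa⟩ := happrox a₁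
  obtain ⟨y, hy, hya⟩ := happrox a₂
  choose u huS hxu hyu using fun n =>
    hS _ (mem_commonCompactBelow_of_isLUB hx hxa h₁₁ h₁₂ n)
      _ (mem_commonCompactBelow_of_isLUB hy hya h₂₁ h₂₂ n)
  obtain ⟨e, he, heS, hue⟩ := hS.exists_monotone_ge u huS
  obtain ⟨c, hc⟩ := hsup e he
  have hu_le_c : ∀ n, u n ≤ c := fun n => (hue n).trans (hc.1 ⟨n, rfl⟩)
  refine ⟨c, hxa.2 ?_, hya.2 ?_, hc.2 ?_, hc.2 ?_⟩ <;> rintro _ ⟨n, rfl⟩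
  · exact (hxu n).trans (hu_le_c n)
  · exact (hyu n).trans (hu_le_c n)
  · exact (le_of_mem_commonCompactBelow (heS n)).1
  · exact (le_of_mem_commonCompactBelow (heS n)).2
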